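/- Let X0 ∈ ℂ^{n1×n2×n3} have skinny natural t-SVD X0 = U ⋆ S ⋆ V^H, and let A = U ⋆ V^H + W for some W ∈ ℂ^{n1×n2×n3} with U^H ⋆ W = 0, W ⋆ V = 0, and tensor spectral norm ‖W‖ ≤ 1. Then A is a subgradient of the tensor nuclear norm at X0: for every X ∈ ℂ^{n1×n2×n3}, ‖X‖_* ≥ ‖X0‖_* + Re⟨A, X − X0⟩. -/

import Mathlib

namespace TC

open scoped BigOperators ComplexConjugate
open Matrix

/-- A third-order complex tensor. -/
abbrev Tensor (n1 n2 n3 : ℕ) := Fin n1 → Fin n2 → Fin n3 → ℂ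

/-- The `k`-th frontal slice of a tensor. -/
def slice {n1 n2 n3 : ℕ} (A : Tensor n1 n2 n3) (k : Fin n3) : Matrix (Fin n1) (Fin n2) ℂ :=
  Matrix.of fun i j => A i j k

/-- The natural tensor-tensor product: slice-wise matrix multiplication. -/
noncomputable def tprod {n1 n2 l n3 : ℕ} (A : Tensor n1 n2 n3) (B : Tensor n2 l n3) : Tensor n1 l n3 :=
  fun i j k => ∑ s, A i s k * B s j k

/-- Slice-wise conjugate transpose. -/
noncomputable def hconj {n1 n2 n3 : ℕ} (A : Tensor n1 n2 n3) : Tensor n2 n1 n3 :=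
  fun i j k => (starRingEnd ℂ) (A j i k)

/-- Mode-3 product: apply the matrix `T` to every mode-3 fiber. -/
noncomputable def mode3 {n1 n2 m n : ℕ} (T : Matrix (Fin m) (Fin n) ℂ) (A : Tensor n1 n2 n) :
    Tensor n1 n2 m :=
  fun i j k => ∑ s, T k s * A i j s

/-- Frobenius norm of a tensor. -/
noncomputable def frobNorm {n1 n2 n3 : ℕ} (A : Tensor n1 n2 n3) : ℝ :=
  Real.sqrt (∑ i, ∑ j, ∑ k, ‖A i j k‖ ^ 2)

/-- Entrywise maximum modulus of a tensor. -/
noncomputable def infNorm {n1 n2 n3 : ℕ} (A : Tensor n1 n2 n3) : ℝ :=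
  ⨆ i, ⨆ j, ⨆ k, ‖A i j k‖

/-- `‖A‖_{1↦2}`: largest Frobenius norm of a lateral slice (column). -/
noncomputable def norm1to2 {n1 n2 n3 : ℕ} (A : Tensor n1 n2 n3) : ℝ :=
  ⨆ j, Real.sqrt (∑ i, ∑ k, ‖A i j k‖ ^ 2)

/-- `‖A‖_{2↦∞}`: largest Frobenius norm of a horizontal slice (row). -/
noncomputable def norm2toInf {n1 n2 n3 : ℕ} (A : Tensor n1 n2 n3) : ℝ :=
  ⨆ i, Real.sqrt (∑ j, ∑ k, ‖A i j k‖ ^ 2)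

/-- `‖A‖_{∞,2}`. -/
noncomputable def normInf2 {n1 n2 n3 : ℕ} (A : Tensor n1 n2 n3) : ℝ :=
  max (norm1to2 A) (norm2toInf A)

/-- Singular values of a complex matrix: square roots of the eigenvalues of `Mᴴ * M`. -/
noncomputable def singVals {m n : ℕ} (M : Matrix (Fin m) (Fin n) ℂ) : Fin n → ℝ :=
  fun i => Real.sqrt ((Matrix.isHermitian_conjTranspose_mul_self M).eigenvalues i)

/-- Matrix spectral norm: the largest singular value. -/
noncomputable def specNormMat {m n : ℕ} (M : Matrix (Fin m) (Fin n) ℂ) : ℝ :=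
  ⨆ i, singVals M i

/-- Matrix nuclear norm: sum of the singular values. -/
noncomputable def nucNormMat {m n : ℕ} (M : Matrix (Fin m) (Fin n) ℂ) : ℝ :=
  ∑ i, singVals M i

/-- Tensor spectral norm: the maximum singular value over all frontal slices. -/
noncomputable def tSpecNorm {n1 n2 n3 : ℕ} (A : Tensor n1 n2 n3) : ℝ :=
  ⨆ k, specNormMat (slice A k)

/-- Tensor nuclear norm: the sum of all singular values of all frontal slices. -/
noncomputable def tNucNorm {n1 n2 n3 : ℕ} (A : Tensor n1 n2 n3) : ℝ :=
  ∑ k, nucNormMat (slice A k)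

/-- Smallest singular value. -/
noncomputable def sigmaMin {m n : ℕ} (M : Matrix (Fin m) (Fin n) ℂ) : ℝ :=
  ⨅ i, singVals M i

/-- Condition number `κ(T) = σ_max(T) / σ_min(T)`. -/
noncomputable def kappa {m n : ℕ} (M : Matrix (Fin m) (Fin n) ℂ) : ℝ :=
  specNormMat M / sigmaMin M

/-- Entrywise maximum modulus of a matrix. -/
noncomputable def matInfNorm {m n : ℕ} (M : Matrix (Fin m) (Fin n) ℂ) : ℝ :=
  ⨆ i, ⨆ j, ‖M i j‖

/-- `‖M‖_{1↦2}`: largest `ℓ2` norm of the columns of `M`. -/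
noncomputable def col2Norm {m n : ℕ} (M : Matrix (Fin m) (Fin n) ℂ) : ℝ :=
  ⨆ j, Real.sqrt (∑ i, ‖M i j‖ ^ 2)

/-- Moore–Penrose pseudo-inverse of a matrix of full column rank. -/
noncomputable def pinv {N3 n3 : ℕ} (T : Matrix (Fin N3) (Fin n3) ℂ) :
    Matrix (Fin n3) (Fin N3) ℂ :=
  (Tᴴ * T)⁻¹ * Tᴴ

/-- `ρ(T) = N3 · max(‖T‖_∞², ‖T†‖_∞²)`. -/
noncomputable def rho {N3 n3 : ℕ} (T : Matrix (Fin N3) (Fin n3) ℂ) : ℝ :=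
  (N3 : ℝ) * max (matInfNorm T ^ 2) (matInfNorm (pinv T) ^ 2)

/-- `T` has full column rank. -/
def FullColRank {N3 n3 : ℕ} (T : Matrix (Fin N3) (Fin n3) ℂ) : Prop := T.rank = n3

/-- The sampling operator `S_Ω`. -/
noncomputable def sampleOp {n1 n2 n3 : ℕ} (Ω : Finset (Fin n1 × Fin n2 × Fin n3)) (A : Tensor n1 n2 n3) :
    Tensor n1 n2 n3 :=
  fun i j k => if (i, j, k) ∈ Ω then A i j k else 0

open Classical in
/-- The probability, under Bernoulli(p) sampling of each index independently, that the
random sampled index set satisfies the event `E`. -/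
noncomputable def berProb {ι : Type*} [Fintype ι] (p : ℝ) (E : Finset ι → Prop) : ℝ :=
  ∑ Ω ∈ (Finset.univ : Finset ι).powerset,
    if E Ω then p ^ Ω.card * (1 - p) ^ (Fintype.card ι - Ω.card) else 0

/-- Skinny natural t-SVD of tubal rank `r`: `A = U ⋆ S ⋆ Vᴴ` with slice-wise orthonormal
columns for `U`, `V`, slice-wise diagonal `S` with nonnegative (real) diagonal entries,
and no zero tube on the diagonal of `S` (so `r` is exactly the tubal rank of `A`). -/
structure IsSkinnyTSVD {n1 n2 n3 : ℕ} (A : Tensor n1 n2 n3) (r : ℕ)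
    (U : Tensor n1 r n3) (S : Tensor r r n3) (V : Tensor n2 r n3) : Prop where
  factor : A = tprod U (tprod S (hconj V))
  U_orth : ∀ k : Fin n3, (slice U k)ᴴ * slice U k = 1
  V_orth : ∀ k : Fin n3, (slice V k)ᴴ * slice V k = 1
  S_diag : ∀ (k : Fin n3) (i j : Fin r), i ≠ j → S i j k = 0
  S_real_nonneg : ∀ (k : Fin n3) (i : Fin r), (S i i k).im = 0 ∧ 0 ≤ (S i i k).re
  tubes_ne : ∀ i : Fin r, ∃ k : Fin n3, S i i k ≠ 0

/-- Full natural t-SVD: `A = U ⋆ S ⋆ Vᴴ` with slice-wise unitary `U`, `V` and slice-wise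
diagonal `S` with nonnegative (real) diagonal entries. -/
structure IsFullTSVD {n1 n2 n3 : ℕ} (A : Tensor n1 n2 n3)
    (U : Tensor n1 n1 n3) (S : Tensor n1 n2 n3) (V : Tensor n2 n2 n3) : Prop where
  factor : A = tprod U (tprod S (hconj V))
  U_unitary : ∀ k : Fin n3, (slice U k)ᴴ * slice U k = 1
  V_unitary : ∀ k : Fin n3, (slice V k)ᴴ * slice V k = 1
  S_diag : ∀ (k : Fin n3) (i : Fin n1) (j : Fin n2), (i : ℕ) ≠ (j : ℕ) → S i j k = 0
  S_real_nonneg : ∀ (k : Fin n3) (i : Fin n1) (j : Fin n2), (i : ℕ) = (j : ℕ) →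
    (S i j k).im = 0 ∧ 0 ≤ (S i j k).re

/-- `(S - τ)₊`: replace every diagonal entry `s` of each frontal slice by `max (s - τ) 0`. -/
noncomputable def shrink {n1 n2 n3 : ℕ} (τ : ℝ) (S : Tensor n1 n2 n3) : Tensor n1 n2 n3 :=
  fun i j k => if (i : ℕ) = (j : ℕ) then ((max ((S i j k).re - τ) 0 : ℝ) : ℂ) else S i j k

/-- The projection `P_S` onto the tangent subspace spanned by the singular tensors. -/
noncomputable def PS {n1 n2 n3 r : ℕ} (U : Tensor n1 r n3) (V : Tensor n2 r n3) (Z : Tensor n1 n2 n3) :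
    Tensor n1 n2 n3 :=
  tprod U (tprod (hconj U) Z) + tprod Z (tprod V (hconj V))
    - tprod U (tprod (hconj U) (tprod Z (tprod V (hconj V))))

/-- The complementary projection `P_{S⊥}`. -/
noncomputable def PSperp {n1 n2 n3 r : ℕ} (U : Tensor n1 r n3) (V : Tensor n2 r n3) (Z : Tensor n1 n2 n3) :
    Tensor n1 n2 n3 :=
  Z - PS U V Z

/-- Operator norm of a map between tensor spaces, with respect to Frobenius norms. -/
noncomputable def opNormT {a b c d e f : ℕ} (L : Tensor a b c → Tensor d e f) : ℝ :=
  sSup {x : ℝ | ∃ Z : Tensor a b c, frobNorm Z ≤ 1 ∧ x = frobNorm (L Z)}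

/-- Tensor column basis `ξ_i ∈ ℂ^{n×1×m}`. -/
noncomputable def xiB (n m : ℕ) (i : Fin n) : Tensor n 1 m := fun a _ _ => if a = i then 1 else 0

/-- Tensor frontal-slice basis `ζ_k ∈ ℂ^{1×1×n}`. -/
noncomputable def zetaB (n : ℕ) (k : Fin n) : Tensor 1 1 n := fun _ _ c => if c = k then 1 else 0

/-- Standard inner product of tensors. -/
noncomputable def tinner {n1 n2 n3 : ℕ} (A B : Tensor n1 n2 n3) : ℂ :=
  ∑ i, ∑ j, ∑ k, (starRingEnd ℂ) (A i j k) * B i j k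

/-- Standard basis tensor `e_{ijk}`. -/
noncomputable def eBasis (n1 n2 n3 : ℕ) (i : Fin n1) (j : Fin n2) (k : Fin n3) : Tensor n1 n2 n3 :=
  fun a b c => if a = i ∧ b = j ∧ c = k then 1 else 0

/-- `X` is the unique optimal solution of:
minimize `‖T(X̂)‖_*` subject to `S_Ω(X̂) = S_Ω(X)`. -/
def UniqueSolution {n1 n2 n3 N3 : ℕ} (T : Matrix (Fin N3) (Fin n3) ℂ) (X : Tensor n1 n2 n3)
    (Ω : Finset (Fin n1 × Fin n2 × Fin n3)) : Prop :=
  ∀ Y : Tensor n1 n2 n3, sampleOp Ω Y = sampleOp Ω X → Y ≠ X →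
    tNucNorm (mode3 T X) < tNucNorm (mode3 T Y)

/-- The tensor incoherence conditions with parameters `μ, ν`. -/
structure Incoherent {n1 n2 n3 N3 r : ℕ} (T : Matrix (Fin N3) (Fin n3) ℂ)
    (U : Tensor n1 r N3) (V : Tensor n2 r N3) (μ ν : ℝ) : Prop where
  hU : ∀ i : Fin n1,
    frobNorm (tprod (hconj U) (xiB n1 N3 i)) ≤ Real.sqrt (μ * r * N3 / n1)
  hV : ∀ j : Fin n2,
    frobNorm (tprod (hconj V) (xiB n2 N3 j)) ≤ Real.sqrt (μ * r * N3 / n2)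
  hUT : ∀ (i : Fin n1) (k : Fin n3),
    frobNorm (tprod (tprod (hconj U) (xiB n1 N3 i)) (mode3 T (zetaB n3 k)))
      ≤ Real.sqrt (ν * r / n1) * col2Norm T
  hVT : ∀ (j : Fin n2) (k : Fin n3),
    frobNorm (tprod (tprod (hconj V) (xiB n2 N3 j)) (mode3 T (zetaB n3 k)))
      ≤ Real.sqrt (ν * r / n2) * col2Norm T

/-- The operator `P_S T R_Ω T† P_S − P_S T T† P_S` on `ℂ^{n1×n2×N3}`, `R_Ω = p⁻¹ S_Ω`. -/
noncomputable def isoOp {n1 n2 n3 N3 r : ℕ} (T : Matrix (Fin N3) (Fin n3) ℂ)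
    (U : Tensor n1 r N3) (V : Tensor n2 r N3)
    (Ω : Finset (Fin n1 × Fin n2 × Fin n3)) (p : ℝ) :
    Tensor n1 n2 N3 → Tensor n1 n2 N3 :=
  fun Z =>
    PS U V (mode3 T ((p⁻¹ : ℝ) • sampleOp Ω (mode3 (pinv T) (PS U V Z))))
      - PS U V (mode3 T (mode3 (pinv T) (PS U V Z)))

/-- The dual-certificate conditions (a) `(T T† − T S_Ω T†)ᴴ Y = 0` (the adjoint being
`T̃ Tᴴ − T̃ S_Ω Tᴴ` with `T̃ = (T†)ᴴ`), (b) `‖P_S(Y) − U ⋆ Vᴴ‖_F ≤ p/(8 κ(T))`, and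
(c) `‖P_{S⊥}(Y)‖ ≤ 1/2` in tensor spectral norm. -/
def DualCert {n1 n2 n3 N3 r : ℕ} (T : Matrix (Fin N3) (Fin n3) ℂ)
    (U : Tensor n1 r N3) (V : Tensor n2 r N3)
    (Ω : Finset (Fin n1 × Fin n2 × Fin n3)) (p : ℝ) (Y : Tensor n1 n2 N3) : Prop :=
  (mode3 (pinv T)ᴴ (mode3 Tᴴ Y) - mode3 (pinv T)ᴴ (sampleOp Ω (mode3 Tᴴ Y)) = 0) ∧
  frobNorm (PS U V Y - tprod U (hconj V)) ≤ p / (8 * kappa T) ∧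
  tSpecNorm (PSperp U V Y) ≤ 1 / 2

/-!
Everything is slice-wise, so it suffices to treat one frontal slice `X0 = U D Vᴴ`,
`A = U Vᴴ + W`. Since `W = W (1 - V Vᴴ)`, we get `Aᴴ A = V Vᴴ + Wᴴ W ≤ V Vᴴ + (1 - V Vᴴ) = 1`,
so `A` is a contraction, and evaluating `tr (Aᴴ X)` in an orthonormal eigenbasis of `Xᴴ X`
and applying Cauchy–Schwarz gives `Re tr (Aᴴ X) ≤ ‖X‖_*`. On the other hand
`√(X0ᴴ X0) = V D Vᴴ`, so `‖X0‖_* = tr D = tr (Aᴴ X0)`.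
-/

end TC

open scoped ComplexOrder MatrixOrder InnerProductSpace

namespace Matrix

variable {𝕜 : Type*} [RCLike 𝕜] {m n r : Type*} [Fintype m] [Fintype n] [Fintype r]

lemma star_mulVec_dotProduct (A : Matrix m n 𝕜) (v : n → 𝕜) (w : m → 𝕜) :
    star (A *ᵥ v) ⬝ᵥ w = star v ⬝ᵥ (Aᴴ *ᵥ w) := by
  rw [star_mulVec, dotProduct_mulVec]

lemma norm_toLp_sq (v : n → 𝕜) : ‖WithLp.toLp 2 v‖ ^ 2 = RCLike.re (star v ⬝ᵥ v) := by
  rw [@norm_sq_eq_re_inner 𝕜, EuclideanSpace.inner_toLp_toLp, dotProduct_comm]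

lemma norm_toLp_mulVec_sq (A : Matrix m n 𝕜) (v : n → 𝕜) :
    ‖WithLp.toLp 2 (A *ᵥ v)‖ ^ 2 = RCLike.re (star v ⬝ᵥ ((Aᴴ * A) *ᵥ v)) := by
  rw [norm_toLp_sq, star_mulVec_dotProduct, mulVec_mulVec]

lemma trace_eq_sum_dotProduct_orthonormalBasis [DecidableEq n] (M : Matrix n n 𝕜)
    (b : OrthonormalBasis n 𝕜 (EuclideanSpace 𝕜 n)) :
    M.trace = ∑ i, star ⇑(b i) ⬝ᵥ (M *ᵥ ⇑(b i)) := by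
  calc M.trace = LinearMap.trace 𝕜 _ (toLpLin 2 2 M) := by
        rw [toLpLin_eq_toLin, trace_toLin_eq]
    _ = ∑ i, ⟪b i, toLpLin 2 2 M (b i)⟫_𝕜 := LinearMap.trace_eq_sum_inner _ b
    _ = _ := by
        simp only [EuclideanSpace.inner_eq_star_dotProduct, ofLp_toLpLin, toLin'_apply,
          dotProduct_comm]

lemma PosSemidef.trace_sqrt [DecidableEq n] {H : Matrix n n 𝕜} (hH : H.PosSemidef) :
    (CFC.sqrt H).trace = ∑ i, (Real.sqrt (hH.1.eigenvalues i) : 𝕜) := by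
  have hQ : star (hH.1.eigenvectorUnitary : Matrix n n 𝕜) * hH.1.eigenvectorUnitary = 1 :=
    Unitary.coe_star_mul_self hH.1.eigenvectorUnitary
  rw [CFC.sqrt_eq_cfc, cfc_nnreal_eq_real _ H hH.nonneg, hH.1.cfc_eq, IsHermitian.cfc,
    Unitary.conjStarAlgAut_apply, trace_mul_comm, ← Matrix.mul_assoc, hQ, Matrix.one_mul,
    trace_diagonal]
  refine Finset.sum_congr rfl fun i _ => ?_
  simp [max_eq_left (hH.eigenvalues_nonneg i)]

lemma re_dotProduct_mulVec_le_of_le_one [DecidableEq n] {H : Matrix n n 𝕜} (hH : H ≤ 1)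
    (v : n → 𝕜) : RCLike.re (star v ⬝ᵥ (H *ᵥ v)) ≤ RCLike.re (star v ⬝ᵥ v) := by
  have := (le_iff.mp hH).re_dotProduct_nonneg v
  rw [sub_mulVec, one_mulVec, dotProduct_sub, map_sub] at this
  linarith

lemma IsHermitian.le_one_of_eigenvalues_le_one [DecidableEq n] {H : Matrix n n 𝕜}
    (hH : H.IsHermitian) (h : ∀ i, hH.eigenvalues i ≤ 1) : H ≤ 1 := by
  rw [← map_one (algebraMap ℝ (Matrix n n 𝕜))]
  refine le_algebraMap_of_spectrum_le (fun x hx => ?_) hH.isSelfAdjoint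
  obtain ⟨i, rfl⟩ := hH.spectrum_real_eq_range_eigenvalues ▸ hx
  exact h i

lemma trace_conjTranspose_mul_mul_mul [DecidableEq r] {U : Matrix m r 𝕜} {V : Matrix n r 𝕜}
    {W : Matrix m n 𝕜} (hU : Uᴴ * U = 1) (hV : Vᴴ * V = 1) (hUW : Uᴴ * W = 0)
    (D : Matrix r r 𝕜) : ((U * Vᴴ + W)ᴴ * (U * D * Vᴴ)).trace = D.trace := by
  have hWU : Wᴴ * U = 0 := by simpa using congrArg conjTranspose hUW
  rw [conjTranspose_add, conjTranspose_mul, conjTranspose_conjTranspose, Matrix.add_mul,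
    trace_add, Matrix.mul_assoc, Matrix.mul_assoc, ← Matrix.mul_assoc Uᴴ, hU, Matrix.one_mul,
    trace_mul_comm, Matrix.mul_assoc, hV, Matrix.mul_one, ← Matrix.mul_assoc, hWU,
    Matrix.zero_mul, trace_zero, add_zero]

lemma conjTranspose_mul_self_add_le_one [DecidableEq n] [DecidableEq r] {U : Matrix m r 𝕜}
    {V : Matrix n r 𝕜} {W : Matrix m n 𝕜} (hU : Uᴴ * U = 1) (hV : Vᴴ * V = 1)
    (hUW : Uᴴ * W = 0) (hWV : W * V = 0) (hW : Wᴴ * W ≤ 1) :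
    (U * Vᴴ + W)ᴴ * (U * Vᴴ + W) ≤ 1 := by
  set P := V * Vᴴ
  have hPH : Pᴴ = P := by rw [conjTranspose_mul, conjTranspose_conjTranspose]
  have hPP : P * P = P := by
    rw [Matrix.mul_assoc, ← Matrix.mul_assoc Vᴴ, hV, Matrix.one_mul]
  have hWP : W * (1 - P) = W := by
    rw [Matrix.mul_sub, Matrix.mul_one, ← Matrix.mul_assoc, hWV, Matrix.zero_mul, sub_zero]
  have hproj : star (1 - P) * (1 - P) = 1 - P := by
    rw [star_eq_conjTranspose, conjTranspose_sub, conjTranspose_one, hPH]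
    simp only [Matrix.sub_mul, Matrix.mul_sub, Matrix.one_mul, Matrix.mul_one, hPP, sub_self,
      sub_zero]
  have hsplit : (U * Vᴴ + W)ᴴ * (U * Vᴴ + W) = P + Wᴴ * W := by
    have hUU : V * Uᴴ * (U * Vᴴ) = P := by
      rw [Matrix.mul_assoc, ← Matrix.mul_assoc Uᴴ, hU, Matrix.one_mul]
    have hUW' : V * Uᴴ * W = 0 := by rw [Matrix.mul_assoc, hUW, Matrix.mul_zero]
    have hWU : Wᴴ * (U * Vᴴ) = 0 := by
      rw [← Matrix.mul_assoc, ← conjTranspose_conjTranspose U, ← conjTranspose_mul, hUW,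
        conjTranspose_zero, Matrix.zero_mul]
    rw [conjTranspose_add, conjTranspose_mul, conjTranspose_conjTranspose, Matrix.add_mul,
      Matrix.mul_add, Matrix.mul_add, hUU, hUW', hWU, add_zero, zero_add]
  have hWW : Wᴴ * W ≤ 1 - P :=
    calc Wᴴ * W = (W * (1 - P))ᴴ * (W * (1 - P)) := by rw [hWP]
      _ = star (1 - P) * (Wᴴ * W) * (1 - P) := by
          rw [conjTranspose_mul, star_eq_conjTranspose]; simp only [Matrix.mul_assoc]
      _ ≤ star (1 - P) * 1 * (1 - P) := star_left_conjugate_le_conjugate hW _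
      _ = 1 - P := by rw [Matrix.mul_one, hproj]
  calc (U * Vᴴ + W)ᴴ * (U * Vᴴ + W) = P + Wᴴ * W := hsplit
    _ ≤ P + (1 - P) := add_le_add_right hWW P
    _ = 1 := add_sub_cancel P 1

end Matrix

namespace TC

open Matrix

lemma singVals_le_specNormMat {m n : ℕ} (M : Matrix (Fin m) (Fin n) ℂ) (i : Fin n) :
    singVals M i ≤ specNormMat M :=
  le_ciSup (Set.finite_range _).bddAbove i

lemma sq_singVals {m n : ℕ} (M : Matrix (Fin m) (Fin n) ℂ) (i : Fin n) :
    singVals M i ^ 2 = (isHermitian_conjTranspose_mul_self M).eigenvalues i :=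
  Real.sq_sqrt (eigenvalues_conjTranspose_mul_self_nonneg M i)

lemma conjTranspose_mul_self_le_one_of_specNormMat_le_one {m n : ℕ}
    {M : Matrix (Fin m) (Fin n) ℂ} (hM : specNormMat M ≤ 1) : Mᴴ * M ≤ 1 :=
  (isHermitian_conjTranspose_mul_self M).le_one_of_eigenvalues_le_one fun i =>
    sq_singVals M i ▸ pow_le_one₀ (Real.sqrt_nonneg _) ((singVals_le_specNormMat M i).trans hM)

lemma re_trace_conjTranspose_mul_le_nucNormMat {m n : ℕ} {A : Matrix (Fin m) (Fin n) ℂ}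
    (hA : Aᴴ * A ≤ 1) (X : Matrix (Fin m) (Fin n) ℂ) : (Aᴴ * X).trace.re ≤ nucNormMat X := by
  set hH := isHermitian_conjTranspose_mul_self X
  rw [trace_eq_sum_dotProduct_orthonormalBasis _ hH.eigenvectorBasis, Complex.re_sum]
  refine Finset.sum_le_sum fun i _ => ?_
  set q : Fin n → ℂ := ⇑(hH.eigenvectorBasis i)
  have hq : ‖WithLp.toLp 2 q‖ = 1 := hH.eigenvectorBasis.orthonormal.1 i
  have hAq : ‖WithLp.toLp 2 (A *ᵥ q)‖ ≤ 1 := by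
    refine (sq_le_one_iff₀ (norm_nonneg _)).mp ?_
    rw [norm_toLp_mulVec_sq, ← one_pow 2, ← hq, norm_toLp_sq]
    exact re_dotProduct_mulVec_le_of_le_one hA q
  have hXq : ‖WithLp.toLp 2 (X *ᵥ q)‖ = singVals X i := by
    rw [← Real.sqrt_sq (norm_nonneg _), norm_toLp_mulVec_sq, ← hH.eigenvalues_eq i]
    rfl
  calc (star q ⬝ᵥ ((Aᴴ * X) *ᵥ q)).re
      = RCLike.re ⟪WithLp.toLp 2 (A *ᵥ q), WithLp.toLp 2 (X *ᵥ q)⟫_ℂ := by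
        rw [EuclideanSpace.inner_toLp_toLp, dotProduct_comm (X *ᵥ q), star_mulVec_dotProduct,
          mulVec_mulVec]
        rfl
    _ ≤ ‖WithLp.toLp 2 (A *ᵥ q)‖ * ‖WithLp.toLp 2 (X *ᵥ q)‖ := re_inner_le_norm _ _
    _ ≤ singVals X i := by
        rw [hXq]; exact mul_le_of_le_one_left (Real.sqrt_nonneg _) hAq

lemma nucNormMat_eq_re_trace_sqrt {m n : ℕ} (M : Matrix (Fin m) (Fin n) ℂ) :
    nucNormMat M = (CFC.sqrt (Mᴴ * M)).trace.re := by
  rw [(posSemidef_conjTranspose_mul_self M).trace_sqrt, Complex.re_sum]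
  exact Finset.sum_congr rfl fun i _ => (Complex.ofReal_re _).symm

lemma nucNormMat_mul_diagonal_mul {m n r : ℕ} {U : Matrix (Fin m) (Fin r) ℂ}
    {V : Matrix (Fin n) (Fin r) ℂ} (hU : Uᴴ * U = 1) (hV : Vᴴ * V = 1) {d : Fin r → ℝ}
    (hd : ∀ i, 0 ≤ d i) : nucNormMat (U * diagonal (fun i => (d i : ℂ)) * Vᴴ) = ∑ i, d i := by
  set D := diagonal (fun i => (d i : ℂ))
  have hD : D.PosSemidef := PosSemidef.diagonal fun i => Complex.zero_le_real.mpr (hd i)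
  have hsq : (V * D * Vᴴ) * (V * D * Vᴴ) = (U * D * Vᴴ)ᴴ * (U * D * Vᴴ) := by
    simp only [conjTranspose_mul, conjTranspose_conjTranspose, hD.1.eq, Matrix.mul_assoc]
    rw [← Matrix.mul_assoc Vᴴ, hV, ← Matrix.mul_assoc Uᴴ, hU, Matrix.one_mul]
  rw [nucNormMat_eq_re_trace_sqrt,
    CFC.sqrt_unique hsq (hD.mul_mul_conjTranspose_same V).nonneg, trace_mul_comm,
    ← Matrix.mul_assoc, hV, Matrix.one_mul, trace_diagonal, Complex.re_sum]
  rfl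

theorem nucNormMat_add_re_trace_le {m n r : ℕ} {U : Matrix (Fin m) (Fin r) ℂ}
    {V : Matrix (Fin n) (Fin r) ℂ} {W : Matrix (Fin m) (Fin n) ℂ} (hU : Uᴴ * U = 1)
    (hV : Vᴴ * V = 1) (hUW : Uᴴ * W = 0) (hWV : W * V = 0) (hW : specNormMat W ≤ 1)
    {d : Fin r → ℝ} (hd : ∀ i, 0 ≤ d i) (X : Matrix (Fin m) (Fin n) ℂ) :
    nucNormMat (U * diagonal (fun i => (d i : ℂ)) * Vᴴ)
      + ((U * Vᴴ + W)ᴴ * (X - U * diagonal (fun i => (d i : ℂ)) * Vᴴ)).trace.re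
      ≤ nucNormMat X := by
  have hA := conjTranspose_mul_self_add_le_one hU hV hUW hWV
    (conjTranspose_mul_self_le_one_of_specNormMat_le_one hW)
  have hX0 :
      ((U * Vᴴ + W)ᴴ * (U * diagonal (fun i => (d i : ℂ)) * Vᴴ)).trace.re = ∑ i, d i := by
    rw [trace_conjTranspose_mul_mul_mul hU hV hUW, trace_diagonal, Complex.re_sum]
    rfl
  rw [Matrix.mul_sub, trace_sub, Complex.sub_re, hX0, nucNormMat_mul_diagonal_mul hU hV hd]
  linarith [re_trace_conjTranspose_mul_le_nucNormMat hA X]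

section Slices

variable {n1 n2 n3 : ℕ}

@[simp] lemma slice_add (A B : Tensor n1 n2 n3) (k : Fin n3) :
    slice (A + B) k = slice A k + slice B k := rfl

@[simp] lemma slice_sub (A B : Tensor n1 n2 n3) (k : Fin n3) :
    slice (A - B) k = slice A k - slice B k := rfl

@[simp] lemma slice_zero (k : Fin n3) : slice (0 : Tensor n1 n2 n3) k = 0 := rfl

@[simp] lemma slice_tprod {l : ℕ} (A : Tensor n1 n2 n3) (B : Tensor n2 l n3) (k : Fin n3) :
    slice (tprod A B) k = slice A k * slice B k := rfl

@[simp] lemma slice_hconj (A : Tensor n1 n2 n3) (k : Fin n3) :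
    slice (hconj A) k = (slice A k)ᴴ := rfl

lemma tinner_eq_sum_trace (A B : Tensor n1 n2 n3) :
    tinner A B = ∑ k, ((slice A k)ᴴ * slice B k).trace := by
  simp only [tinner, trace, diag, mul_apply, conjTranspose_apply, slice, of_apply,
    RCLike.star_def]
  exact (Finset.sum_congr rfl fun _ _ => Finset.sum_comm).trans
    (Finset.sum_comm.trans (Finset.sum_congr rfl fun _ _ => Finset.sum_comm))

lemma specNormMat_slice_le_tSpecNorm (A : Tensor n1 n2 n3) (k : Fin n3) :
    specNormMat (slice A k) ≤ tSpecNorm A :=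
  le_ciSup (f := fun k => specNormMat (slice A k)) (Set.finite_range _).bddAbove k

lemma IsSkinnyTSVD.slice_eq {r : ℕ} {A : Tensor n1 n2 n3} {U : Tensor n1 r n3}
    {S : Tensor r r n3} {V : Tensor n2 r n3} (h : IsSkinnyTSVD A r U S V) (k : Fin n3) :
    slice A k = slice U k * diagonal (fun i => ((S i i k).re : ℂ)) * (slice V k)ᴴ := by
  have hS : slice S k = diagonal (fun i => ((S i i k).re : ℂ)) := by
    ext i j
    by_cases hij : i = j
    · subst hij
      rw [diagonal_apply_eq]
      exact Complex.ext rfl (h.S_real_nonneg k i).1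
    · rw [diagonal_apply_ne _ hij]
      exact h.S_diag k i j hij
  rw [h.factor, slice_tprod, slice_tprod, slice_hconj, hS, Matrix.mul_assoc]

end Slices

/-- **Subgradient of the tensor nuclear norm.** -/
theorem subgradient_of_tNucNorm {n1 n2 n3 r : ℕ} (X0 : Tensor n1 n2 n3)
    (U : Tensor n1 r n3) (S : Tensor r r n3) (V : Tensor n2 r n3)
    (hsvd : IsSkinnyTSVD X0 r U S V) (W : Tensor n1 n2 n3)
    (hUW : tprod (hconj U) W = 0) (hWV : tprod W V = 0) (hW : tSpecNorm W ≤ 1) :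
    ∀ X : Tensor n1 n2 n3,
      tNucNorm X0 + (tinner (tprod U (hconj V) + W) (X - X0)).re ≤ tNucNorm X := by
  intro X
  rw [tinner_eq_sum_trace, Complex.re_sum, tNucNorm, tNucNorm, ← Finset.sum_add_distrib]
  refine Finset.sum_le_sum fun k _ => ?_
  have hUWk : (slice U k)ᴴ * slice W k = 0 := by
    simpa only [slice_tprod, slice_hconj, slice_zero] using congrArg (slice · k) hUW
  have hWVk : slice W k * slice V k = 0 := by
    simpa only [slice_tprod, slice_zero] using congrArg (slice · k) hWV
  simpa only [slice_add, slice_sub, slice_tprod, slice_hconj, hsvd.slice_eq k] using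
    nucNormMat_add_re_trace_le (hsvd.U_orth k) (hsvd.V_orth k) hUWk hWVk
      ((specNormMat_slice_le_tSpecNorm W k).trans hW) (fun i => (hsvd.S_real_nonneg k i).2)
      (slice X k)

end TC
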